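/- Let G be the complement of a directed Hamiltonian cycle on N = C(k,2) vertices. In any (k,1)-representation of G, every vertex u satisfies |Q_d(u)| = 2 and |Q_p(u)| = 2, with Q_d(u) = Q_p(u-1), and the map u ↦ Q_d(u) is a bijection from the vertex set onto the set of all 2-element subsets of {1,…,k}. -/

import Mathlib

/-- Inner product of two bit vectors. -/
def bvInner {k : ℕ} (d p : Fin k → Bool) : ℕ := ∑ q, (if d q ∧ p q then 1 else 0)

/-!
The edges missing from `G` say that `Q_d(u) ∩ Q_p(u - 1)` has at least two elements, while
`Q_d(i) ∩ Q_p(j)` has at most one for all other `i ≠ j`. Pick a pair `S u ⊆ Q_d(u) ∩ Q_p(u - 1)`.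
If `S u = S v` with `u ≠ v`, the pair would also lie in `Q_d(u) ∩ Q_p(v - 1)` and
`Q_d(v) ∩ Q_p(u - 1)`, forcing `u = v - 1` and `v = u - 1`, impossible on a cycle of length
at least 3. So `u ↦ S u` is injective, hence onto the `C(k,2)` pairs of `{1,…,k}`. Now every pair
inside `Q_d(u)` is some `S v ⊆ Q_p(v - 1)` and therefore is `S u` or `S (u + 1)`; a set with at
most two 2-subsets has at most two elements, so `Q_d(u) = S u`. Likewise `Q_p(u - 1) = S u`.
-/

open Finset Function

lemma bvInner_eq_card {k : ℕ} (d p : Fin k → Bool) :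
    bvInner d p = #(univ.filter (fun a => d a = true) ∩ univ.filter (fun a => p a = true)) := by
  rw [bvInner, ← filter_and, card_filter]

lemma ZMod.two_ne_zero_of_three_le {n : ℕ} (hn : 3 ≤ n) : (2 : ZMod n) ≠ 0 := by
  intro h
  have hdvd : n ∣ 2 := (ZMod.natCast_eq_zero_iff 2 n).mp (by exact_mod_cast h)
  have := Nat.le_of_dvd two_pos hdvd
  omega

lemma Finset.card_le_two_of_forall_card_two_subset {α : Type*} [DecidableEq α] {t a b : Finset α}
    (h : ∀ T ⊆ t, #T = 2 → T = a ∨ T = b) : #t ≤ 2 := by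
  have hsub : t.powersetCard 2 ⊆ {a, b} := fun T hT => by
    obtain ⟨hTt, hT2⟩ := mem_powersetCard.mp hT
    simpa using h T hTt hT2
  have hchoose : (#t).choose 2 ≤ 2 := by
    simpa [card_powersetCard] using (card_le_card hsub).trans card_le_two
  by_contra! h3
  exact absurd (hchoose.trans' (Nat.choose_le_choose 2 h3)) (by decide)

lemma Finset.exists_eq_of_injective_of_card_eq_choose {V α : Type*} [Fintype V] [Fintype α]
    {k : ℕ} {S : V → Finset α} (hS : ∀ u, #(S u) = k) (hinj : Injective S)
    (hcard : Fintype.card V = (Fintype.card α).choose k) {T : Finset α} (hT : #T = k) :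
    ∃ u, S u = T := by
  let f : V → {T : Finset α // #T = k} := fun u => ⟨S u, hS u⟩
  have hf : Bijective f :=
    (Fintype.bijective_iff_injective_and_card f).mpr
      ⟨fun u v huv => hinj (congrArg Subtype.val huv), by rw [hcard, Fintype.card_finset_len]⟩
  obtain ⟨u, hu⟩ := hf.surjective ⟨T, hT⟩
  exact ⟨u, congrArg Subtype.val hu⟩

variable {V α : Type*} [CommRing V] [DecidableEq α]

/-- `D` and `P` are the supports `Q_d`, `Q_p` of a `(k,1)`-representation of the complement of
the cycle `u → u - 1`. -/
def IsCycleComplementRep (D P : V → Finset α) : Prop :=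
  ∀ i j, i ≠ j → (j ≠ i - 1 ↔ #(D i ∩ P j) ≤ 1)

namespace IsCycleComplementRep

variable {D P : V → Finset α}

lemma two_le_card_inter_sub_one (hrep : IsCycleComplementRep D P) (h1 : (1 : V) ≠ 0) (u : V) :
    2 ≤ #(D u ∩ P (u - 1)) := by
  have hne : u ≠ u - 1 := fun h => h1 (by linear_combination h)
  by_contra! h
  exact (hrep u (u - 1) hne).mpr (by omega) rfl

lemma eq_or_eq_sub_one_of_two_le_card_inter (hrep : IsCycleComplementRep D P) {i j : V}
    (h : 2 ≤ #(D i ∩ P j)) : i = j ∨ j = i - 1 := by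
  by_contra! hij
  have := (hrep i j hij.1).mp hij.2
  omega

lemma exists_pair_subset (hrep : IsCycleComplementRep D P) (h1 : (1 : V) ≠ 0) :
    ∃ S : V → Finset α, (∀ u, S u ⊆ D u ∩ P (u - 1)) ∧ ∀ u, #(S u) = 2 := by
  choose S hS hS2 using fun u => exists_subset_card_eq (hrep.two_le_card_inter_sub_one h1 u)
  exact ⟨S, hS, hS2⟩

section pairs

variable {S : V → Finset α}

lemma injective_pair (hrep : IsCycleComplementRep D P) (hS : ∀ u, S u ⊆ D u ∩ P (u - 1))
    (hS2 : ∀ u, #(S u) = 2) (h2 : (2 : V) ≠ 0) : Injective S := by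
  intro u v huv
  have hu : 2 ≤ #(D u ∩ P (v - 1)) := hS2 u ▸ card_le_card
    (subset_inter ((hS u).trans inter_subset_left) (huv ▸ (hS v).trans inter_subset_right))
  have hv : 2 ≤ #(D v ∩ P (u - 1)) := hS2 v ▸ card_le_card
    (subset_inter ((hS v).trans inter_subset_left) (huv ▸ (hS u).trans inter_subset_right))
  rcases hrep.eq_or_eq_sub_one_of_two_le_card_inter hu with hu | hu
  · rcases hrep.eq_or_eq_sub_one_of_two_le_card_inter hv with hv | hv
    · exact absurd (by linear_combination hu + hv) h2
    · exact sub_left_inj.mp hv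
  · exact (sub_left_inj.mp hu).symm

lemma eq_pair_or_eq_pair_add_one_of_subset (hrep : IsCycleComplementRep D P)
    (hS : ∀ u, S u ⊆ D u ∩ P (u - 1))
    (hsurj : ∀ T : Finset α, #T = 2 → ∃ v, S v = T) {u : V} {T : Finset α} (hT : T ⊆ D u)
    (hT2 : #T = 2) : T = S u ∨ T = S (u + 1) := by
  obtain ⟨v, rfl⟩ := hsurj T hT2
  have huv : 2 ≤ #(D u ∩ P (v - 1)) :=
    hT2 ▸ card_le_card (subset_inter hT ((hS v).trans inter_subset_right))
  rcases hrep.eq_or_eq_sub_one_of_two_le_card_inter huv with h | h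
  · exact .inr (by rw [h, sub_add_cancel])
  · exact .inl (by rw [sub_left_inj.mp h])

lemma eq_pair_or_eq_pair_sub_one_of_subset (hrep : IsCycleComplementRep D P)
    (hS : ∀ u, S u ⊆ D u ∩ P (u - 1))
    (hsurj : ∀ T : Finset α, #T = 2 → ∃ v, S v = T) {u : V} {T : Finset α} (hT : T ⊆ P (u - 1))
    (hT2 : #T = 2) : T = S u ∨ T = S (u - 1) := by
  obtain ⟨v, rfl⟩ := hsurj T hT2
  have huv : 2 ≤ #(D v ∩ P (u - 1)) :=
    hT2 ▸ card_le_card (subset_inter ((hS v).trans inter_subset_left) hT)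
  rcases hrep.eq_or_eq_sub_one_of_two_le_card_inter huv with h | h
  · exact .inr (by rw [h])
  · exact .inl (by rw [sub_left_inj.mp h])

end pairs

theorem card_eq_two_and_bijective [Fintype V] [Fintype α] (hrep : IsCycleComplementRep D P)
    (h2 : (2 : V) ≠ 0) (hcard : Fintype.card V = (Fintype.card α).choose 2) :
    (∀ u, #(D u) = 2 ∧ P (u - 1) = D u) ∧ Injective D ∧ ∀ T : Finset α, #T = 2 → ∃ u, D u = T := by
  have h1 : (1 : V) ≠ 0 := fun h => h2 (by rw [← one_add_one_eq_two, h, add_zero])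
  obtain ⟨S, hS, hS2⟩ := hrep.exists_pair_subset h1
  have hinj := hrep.injective_pair hS hS2 h2
  have hsurj (T : Finset α) (hT : #T = 2) :=
    exists_eq_of_injective_of_card_eq_choose hS2 hinj hcard hT
  have hD : D = S := funext fun u => (eq_of_subset_of_card_le ((hS u).trans inter_subset_left)
    (hS2 u ▸ card_le_two_of_forall_card_two_subset
      fun _ => hrep.eq_pair_or_eq_pair_add_one_of_subset hS hsurj)).symm
  have hP u : P (u - 1) = S u := (eq_of_subset_of_card_le ((hS u).trans inter_subset_right)
    (hS2 u ▸ card_le_two_of_forall_card_two_subset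
      fun _ => hrep.eq_pair_or_eq_pair_sub_one_of_subset hS hsurj)).symm
  subst hD
  exact ⟨fun u => ⟨hS2 u, hP u⟩, hinj, hsurj⟩

end IsCycleComplementRep

/-- In any `(k,1)`-representation of the complement of a directed Hamiltonian cycle on
`N = C(k,2)` vertices, every donor and patient support has exactly two bits,
`Q_d(u) = Q_p(u-1)`, and `u ↦ Q_d(u)` is a bijection onto the 2-element subsets. -/
theorem gadget_unique_representation (k : ℕ) [NeZero (Nat.choose k 2)]
    (hN : 3 ≤ Nat.choose k 2)
    (d p : ZMod (Nat.choose k 2) → Fin k → Bool)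
    (hrep : ∀ i j : ZMod (Nat.choose k 2), i ≠ j →
      ((j ≠ i - 1) ↔ bvInner (d i) (p j) ≤ 1)) :
    (∀ u, (Finset.univ.filter (fun a => d u a = true)).card = 2 ∧
          (Finset.univ.filter (fun a => p u a = true)).card = 2 ∧
          Finset.univ.filter (fun a => d u a = true) =
            Finset.univ.filter (fun a => p (u - 1) a = true)) ∧
    (∀ u v, Finset.univ.filter (fun a => d u a = true) =
        Finset.univ.filter (fun a => d v a = true) → u = v) ∧
    (∀ S : Finset (Fin k), S.card = 2 →
      ∃ u, Finset.univ.filter (fun a => d u a = true) = S) := by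
  have hrep' : IsCycleComplementRep (fun u => univ.filter (fun a => d u a = true))
      (fun u => univ.filter (fun a => p u a = true)) := fun i j hij => by
    rw [← bvInner_eq_card]
    exact hrep i j hij
  obtain ⟨hpair, hinj, hsurj⟩ :=
    hrep'.card_eq_two_and_bijective (ZMod.two_ne_zero_of_three_le hN) (by simp)
  refine ⟨fun u => ⟨(hpair u).1, ?_, (hpair u).2.symm⟩, fun _ _ h => hinj h, hsurj⟩
  have hsucc := hpair (u + 1)
  rw [add_sub_cancel_right] at hsucc
  exact hsucc.2 ▸ hsucc.1
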